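/- arXiv:2601.00961 — 3 statements merged into one kernel-verified Lean document; each statement's English description precedes it below -/
import Mathlib

section
/- Let m ≥ 1 and k ≥ 1 be integers and let Γ be an abelian group of exponent m (i.e. m·γ = 0 for all γ ∈ Γ). If P : Γ → ℝ/ℤ is a polynomial of degree at most k, meaning that all (k+1)-fold discrete derivatives ∂_{γ₁}⋯∂_{γ_{k+1}} P vanish identically, then the function m·P (pointwise multiplication by m in ℝ/ℤ) is a polynomial of degree at most k−1. -/
/-- Discrete derivative of `f : Γ → A` in direction `γ`. -/
def dderiv {Γ A : Type*} [AddCommGroup Γ] [AddCommGroup A] (γ : Γ) (f : Γ → A) : Γ → A :=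
  fun x => f (x + γ) - f x

/-- `f` is a polynomial of degree at most `k` iff every `(k+1)`-fold iterated
discrete derivative vanishes identically. -/
def IsPolyDeg {Γ A : Type*} [AddCommGroup Γ] [AddCommGroup A] (k : ℕ) (f : Γ → A) : Prop :=
  ∀ l : List Γ, l.length = k + 1 → l.foldr dderiv f = 0

lemma foldr_dderiv_smul {Γ A : Type*} [AddCommGroup Γ] [AddCommGroup A] (m : ℕ)
    (f : Γ → A) (l : List Γ) :
    l.foldr dderiv (fun x => m • f x) = fun x => m • l.foldr dderiv f x := by
  induction l with
  | nil => rfl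
  | cons γ t ih =>
    funext x
    simp only [List.foldr_cons, ih, dderiv, smul_sub]

lemma dderiv_telescope {Γ A : Type*} [AddCommGroup Γ] [AddCommGroup A]
    (γ : Γ) (f : Γ → A) (n : ℕ) (x : Γ) :
    f (x + n • γ) - f x = ∑ j ∈ Finset.range n, dderiv γ f (x + j • γ) := by
  induction n with
  | zero => simp
  | succ n ih =>
    rw [Finset.sum_range_succ, ← ih, dderiv]
    have : x + (n + 1) • γ = x + n • γ + γ := by rw [succ_nsmul, ← add_assoc]
    rw [this]
    abel

theorem mul_poly_of_boundedExponent {Γ : Type*} [AddCommGroup Γ]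
    (m k : ℕ) (hm : 1 ≤ m) (hk : 1 ≤ k)
    (hexp : ∀ γ : Γ, m • γ = 0)
    (P : Γ → AddCircle (1 : ℝ)) (hP : IsPolyDeg k P) :
    IsPolyDeg (k - 1) (fun x => m • P x) := by
  intro l hl
  match l, hl with
  | γ :: t, hl =>
    have ht : t.length = k - 1 := by simpa using hl
    set R := t.foldr dderiv P with hR
    set Q := dderiv γ R with hQ
    have hQconst : ∀ x y : Γ, Q x = Q y := by
      intro x y
      have h0 : dderiv (y - x) Q = 0 := by
        have := hP ((y - x) :: γ :: t) (by simp [ht]; omega)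
        simpa [hR, hQ] using this
      have := congrFun h0 x
      simp only [dderiv, Pi.zero_apply, sub_eq_zero] at this
      simpa using this.symm
    rw [foldr_dderiv_smul]
    funext x
    show m • Q x = 0
    have htel := dderiv_telescope γ R m x
    rw [hexp γ, add_zero, sub_self] at htel
    have : ∑ j ∈ Finset.range m, dderiv γ R (x + j • γ) = m • Q x := by
      rw [Finset.sum_congr rfl (fun j _ => hQconst (x + j • γ) x)]
      simp
    rw [this] at htel
    exact htel.symm
end

section
/- Let m ≥ 1, k ≥ 1 and let Γ be an abelian group of exponent m. Then for every polynomial P : Γ → ℝ/ℤ of degree at most k, the function m^k · P is constant. Equivalently, the quotient group Poly_{≤k}(Γ, ℝ/ℤ) / (constant functions) has exponent dividing m^k. -/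
theorem aux_pow_smul {Γ : Type*} [AddCommGroup Γ] (m : ℕ)
    (hexp : ∀ γ : Γ, m • γ = 0) :
    ∀ (k : ℕ) (P : Γ → AddCircle (1 : ℝ)), IsPolyDeg k P →
      ∀ x γ : Γ, m ^ k • P (x + γ) = m ^ k • P x := by
  intro k
  induction k with
  | zero =>
    intro P hP x γ
    have h : dderiv γ P = 0 := hP [γ] rfl
    have h2 := congrFun h x
    simp only [dderiv, Pi.zero_apply, sub_eq_zero] at h2
    simp [h2]
  | succ n ih =>
    intro P hP x γ
    have hd : ∀ δ : Γ, IsPolyDeg n (dderiv δ P) := by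
      intro δ l hl
      have h3 : (l ++ [δ]).foldr dderiv P = 0 := hP _ (by simp [hl])
      simpa [List.foldr_append] using h3
    have hc : ∀ δ a b : Γ, m ^ n • dderiv δ P a = m ^ n • dderiv δ P b := by
      intro δ a b
      have h1 := ih _ (hd δ) b (a - b)
      simpa using h1
    set g : Γ → AddCircle (1 : ℝ) := fun δ => m ^ n • dderiv δ P 0 with hg
    have gadd : ∀ a b, g (a + b) = g a + g b := by
      intro a b
      have hsplit : dderiv (a + b) P 0 = dderiv a P b + dderiv b P 0 := by
        simp only [dderiv, zero_add]
        rw [add_comm b a]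
        abel
      rw [hg]
      simp only
      rw [hsplit, smul_add, hc a b 0]
    have hhom : ∀ (n' : ℕ) (a : Γ), g (n' • a) = n' • g a := by
      intro n' a
      induction n' with
      | zero => simp [hg, dderiv]
      | succ j hj => rw [succ_nsmul, succ_nsmul, gadd, hj]
    have hg0 : ∀ a, m • g a = 0 := by
      intro a
      rw [← hhom, hexp]
      simp [hg, dderiv]
    have key : m ^ (n + 1) • dderiv γ P x = 0 := by
      calc m ^ (n + 1) • dderiv γ P x = m • (m ^ n • dderiv γ P x) := by
            rw [← mul_smul, pow_succ, mul_comm]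
        _ = m • g γ := by rw [hc γ x 0]
        _ = 0 := hg0 γ
    have hsub : m ^ (n + 1) • P (x + γ) - m ^ (n + 1) • P x = 0 := by
      rw [← smul_sub]; exact key
    rwa [sub_eq_zero] at hsub

theorem pow_smul_poly_const {Γ : Type*} [AddCommGroup Γ]
    (m k : ℕ) (hm : 1 ≤ m) (hk : 1 ≤ k)
    (hexp : ∀ γ : Γ, m • γ = 0)
    (P : Γ → AddCircle (1 : ℝ)) (hP : IsPolyDeg k P) :
    ∀ x y : Γ, m ^ k • P x = m ^ k • P y := by
  intro x y
  have h := aux_pow_smul m hexp k P hP x (y - x)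
  simpa using h.symm
end

section
/- Let 0 → A →^ι B →^π C → 0 be a short exact sequence of abelian groups with C of bounded exponent (there is N ≥ 1 with N·c = 0 for all c ∈ C). Suppose that for every n ∈ ℕ one has ι(A) ∩ nB = n·ι(A) (purity of ι(A) in B). Then the sequence splits: there exists a group homomorphism s : C → B with π ∘ s = id_C. -/
/-!
The kernel `G = ι(A)` of `π` is pure in `B` and contains `N • B`. By Zorn's lemma take `E` maximal
with `G ⊓ E = ⊥` and `G ⊔ E` pure. If `G ⊔ E ≠ B`, the quotient `Q = B / (G ⊔ E)` is bounded and
nonzero, and an element `c ∈ Q` whose order `e` is the exponent of `Q` generates a pure subgroup: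
if `k • c = n • x` then `gcd n e ∣ k`. Purity of `G ⊔ E` lifts `c` to some `b` with `e • b = 0`, and
`E ⊔ ⟨b⟩` contradicts maximality. Hence `E` is a complement of `ker π`, and inverting `π` on `E`
gives the section. This Zorn argument replaces the decomposition of `C` into cyclic groups.
-/

namespace AddSubgroup

variable {B : Type*} [AddCommGroup B]

def IsPure (H : AddSubgroup B) : Prop :=
  ∀ (n : ℕ) (b : B), n • b ∈ H → ∃ h ∈ H, n • b = n • h

theorem isPure_iSup_of_directed {ι : Type*} [Nonempty ι] {K : ι → AddSubgroup B}
    (hK : Directed (· ≤ ·) K) (h : ∀ i, (K i).IsPure) : (iSup K).IsPure := by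
  intro n b hb
  obtain ⟨i, hi⟩ := (mem_iSup_of_directed hK).1 hb
  obtain ⟨x, hx, hbx⟩ := h i n b hi
  exact ⟨x, mem_iSup_of_mem i hx, hbx⟩

theorem IsPure.of_isPure_map_mk {H K : AddSubgroup B} (hHK : H ≤ K) (hH : H.IsPure)
    (hK : (K.map (QuotientAddGroup.mk' H)).IsPure) : K.IsPure := by
  intro n b hb
  obtain ⟨q, hq, hbq⟩ := hK n b (by simpa using mem_map_of_mem (QuotientAddGroup.mk' H) hb)
  obtain ⟨k, hk, rfl⟩ := mem_map.1 hq
  have hbk : n • (b - k) ∈ H := by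
    rw [smul_sub, ← QuotientAddGroup.eq_iff_sub_mem]
    simpa using hbq
  obtain ⟨x, hx, hbkx⟩ := hH n (b - k) hbk
  refine ⟨k + x, add_mem hk (hHK hx), ?_⟩
  rw [smul_add, ← hbkx, smul_sub, add_sub_cancel]

theorem isPure_zmultiples_of_addOrderOf_eq_exponent {Q : Type*} [AddCommGroup Q] {c : Q}
    (hQ : AddMonoid.ExponentExists Q) (hc : addOrderOf c = AddMonoid.exponent Q) :
    (zmultiples c).IsPure := by
  rintro n x ⟨k, hk : k • c = n • x⟩
  set e := addOrderOf c with he_def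
  have hx : e • x = 0 := hc ▸ AddMonoid.exponent_nsmul_eq_zero x
  have he : e ≠ 0 := hc ▸ hQ.exponent_ne_zero
  obtain ⟨u, v, hbez⟩ : ∃ u v : ℤ, (n.gcd e : ℤ) = n * u + e * v :=
    ⟨_, _, Nat.gcd_eq_gcd_ab n e⟩
  obtain ⟨n', hn⟩ := Nat.gcd_dvd_left n e
  obtain ⟨e', he'⟩ := Nat.gcd_dvd_right n e
  generalize n.gcd e = d at hbez hn he'
  -- `e' • (k • c) = (n' * e) • x = 0`, so `d * e' ∣ e' * k`.
  have hd : (d : ℤ) ∣ k := by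
    have hkill : ((e' : ℤ) * k) • c = 0 := by
      rw [mul_zsmul, hk, natCast_zsmul, smul_smul, hn,
        show e' * (d * n') = n' * e by rw [he']; ring, mul_smul, hx, smul_zero]
    have h := addOrderOf_dvd_iff_zsmul_eq_zero.2 hkill
    rw [← he_def, he', Nat.cast_mul, mul_comm (e' : ℤ) k] at h
    have he'0 : e' ≠ 0 := by rintro rfl; exact he (by rw [he', mul_zero])
    exact (mul_dvd_mul_iff_right (by exact_mod_cast he'0)).1 h
  obtain ⟨t, rfl⟩ := hd
  refine ⟨(t * u) • c, zsmul_mem_zmultiples c _, ?_⟩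
  have hec : (e : ℤ) • c = 0 := by rw [natCast_zsmul, he_def, addOrderOf_nsmul_eq_zero]
  rw [← hk, ← natCast_zsmul, smul_smul, hbez,
    show ((n : ℤ) * u + e * v) * t = n * (t * u) + v * t * e by ring, add_zsmul,
    mul_zsmul c (v * t) (e : ℤ), hec, smul_zero, add_zero]

theorem IsPure.exists_mk_eq_nsmul_eq_zero {H : AddSubgroup B} (hH : H.IsPure) (q : B ⧸ H) :
    ∃ b : B, (b : B ⧸ H) = q ∧ addOrderOf q • b = 0 := by
  obtain ⟨b, rfl⟩ := QuotientAddGroup.mk_surjective q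
  have hb : addOrderOf (b : B ⧸ H) • b ∈ H := by
    rw [← QuotientAddGroup.eq_zero_iff, QuotientAddGroup.mk_nsmul, addOrderOf_nsmul_eq_zero]
  obtain ⟨h, hh, hbh⟩ := hH _ b hb
  refine ⟨b - h, ?_, by rw [smul_sub, hbh, sub_self]⟩
  rw [QuotientAddGroup.mk_sub, (QuotientAddGroup.eq_zero_iff h).2 hh, sub_zero]

theorem IsPure.exists_notMem_isPure_sup_zmultiples {H : AddSubgroup B} (hH : H.IsPure)
    (hHtop : H ≠ ⊤) {N : ℕ} (hN : N ≠ 0) (hNH : ∀ b, N • b ∈ H) :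
    ∃ b ∉ H, Disjoint H (zmultiples b) ∧ (H ⊔ zmultiples b).IsPure := by
  have hQ : AddMonoid.ExponentExists (B ⧸ H) := by
    refine ⟨N, Nat.pos_of_ne_zero hN, fun q => QuotientAddGroup.induction_on q fun b => ?_⟩
    rw [← QuotientAddGroup.mk_nsmul, QuotientAddGroup.eq_zero_iff]
    exact hNH b
  obtain ⟨c, hc⟩ := AddMonoid.exists_addOrderOf_eq_exponent hQ
  obtain ⟨b, rfl, hb⟩ := hH.exists_mk_eq_nsmul_eq_zero c
  refine ⟨b, fun hbH => hHtop ?_, ?_, ?_⟩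
  · rw [(QuotientAddGroup.eq_zero_iff b).2 hbH, addOrderOf_zero] at hc
    refine (eq_top_iff' H).2 fun x => ?_
    rw [← QuotientAddGroup.eq_zero_iff, ← one_nsmul (x : B ⧸ H), hc,
      AddMonoid.exponent_nsmul_eq_zero]
  · rw [disjoint_def]
    rintro _ hkb ⟨k, rfl⟩
    have hk : k • (b : B ⧸ H) = 0 := by
      rw [← QuotientAddGroup.mk_zsmul, QuotientAddGroup.eq_zero_iff]
      exact hkb
    obtain ⟨j, rfl⟩ := addOrderOf_dvd_iff_zsmul_eq_zero.2 hk
    dsimp only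
    rw [mul_zsmul', natCast_zsmul, hb, zsmul_zero]
  · refine hH.of_isPure_map_mk le_sup_left ?_
    rw [map_sup, QuotientAddGroup.map_mk'_self, bot_sup_eq, AddMonoidHom.map_zmultiples,
      QuotientAddGroup.mk'_apply]
    exact isPure_zmultiples_of_addOrderOf_eq_exponent hQ hc

theorem IsPure.exists_isCompl {G : AddSubgroup B} (hG : G.IsPure) {N : ℕ} (hN : N ≠ 0)
    (hNG : ∀ b, N • b ∈ G) : ∃ E, IsCompl G E := by
  set S : Set (AddSubgroup B) := {E | Disjoint G E ∧ (G ⊔ E).IsPure}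
  have hchain : ∀ c ⊆ S, IsChain (· ≤ ·) c → ∀ E ∈ c, ∃ ub ∈ S, ∀ E' ∈ c, E' ≤ ub := by
    intro c hcS hc E hE
    have : Nonempty c := ⟨⟨E, hE⟩⟩
    refine ⟨sSup c, ⟨disjoint_def.2 fun hxG hx => ?_, ?_⟩, fun _ => le_sSup⟩
    · obtain ⟨E', hE', hxE'⟩ := (mem_sSup_of_directedOn ⟨E, hE⟩ hc.directedOn).1 hx
      exact disjoint_def.1 (hcS hE').1 hxG hxE'
    · rw [sSup_eq_iSup', sup_iSup]
      exact isPure_iSup_of_directed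
        (hc.directedOn.directed_val.mono_comp _ fun _ _ h => sup_le_sup_left h G)
        fun E' => (hcS E'.2).2
  obtain ⟨E, -, hE⟩ := zorn_le_nonempty₀ S hchain ⊥ ⟨disjoint_bot_right, by rwa [sup_bot_eq]⟩
  refine ⟨E, hE.prop.1, codisjoint_iff.2 (by_contra fun hne => ?_)⟩
  obtain ⟨b, hb, hdisj, hpure⟩ :=
    hE.prop.2.exists_notMem_isPure_sup_zmultiples hne hN fun x => mem_sup_left (hNG x)
  have hmem : E ⊔ zmultiples b ∈ S :=
    ⟨hE.prop.1.disjoint_sup_right_of_disjoint_sup_left hdisj, by rwa [← sup_assoc]⟩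
  exact hb (mem_sup_right (hE.2 hmem le_sup_left (mem_sup_right (mem_zmultiples b))))

end AddSubgroup

theorem AddMonoidHom.exists_comp_eq_id_of_isCompl_ker {B C : Type*} [AddCommGroup B]
    [AddGroup C] {π : B →+ C} (hπ : Function.Surjective π) {E : AddSubgroup B}
    (hE : IsCompl π.ker E) : ∃ s : C →+ B, π.comp s = AddMonoidHom.id C := by
  have hbij : Function.Bijective (π.comp E.subtype) := by
    refine ⟨(injective_iff_map_eq_zero _).2 fun e he => ?_, fun c => ?_⟩
    · exact Subtype.ext (AddSubgroup.disjoint_def.1 hE.disjoint he e.2)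
    · obtain ⟨b, rfl⟩ := hπ c
      obtain ⟨k, hk, e, he, rfl⟩ := AddSubgroup.mem_sup.1 (hE.sup_eq_top ▸ AddSubgroup.mem_top b)
      exact ⟨⟨e, he⟩, by simp [(AddMonoidHom.mem_ker).1 hk]⟩
  refine ⟨E.subtype.comp (AddEquiv.ofBijective _ hbij).symm.toAddMonoidHom, ?_⟩
  ext c
  exact (AddEquiv.ofBijective _ hbij).apply_symm_apply c

theorem pure_split_general {A B C : Type*} [AddCommGroup A] [AddCommGroup B] [AddCommGroup C]
    (ι : A →+ B) (π : B →+ C)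
    (hπ : Function.Surjective π)
    (hexact : ι.range = π.ker)
    (N : ℕ) (hN : 1 ≤ N) (hexp : ∀ c : C, N • c = 0)
    (hpure : ∀ (n : ℕ) (a : A) (x : B), ι a = n • x → ∃ a' : A, ι a = n • ι a') :
    ∃ s : C →+ B, π.comp s = AddMonoidHom.id C := by
  have hker : π.ker.IsPure := by
    intro n b hb
    obtain ⟨a, ha⟩ := hexact ▸ hb
    obtain ⟨a', ha'⟩ := hpure n a b ha
    exact ⟨ι a', hexact ▸ ⟨a', rfl⟩, ha ▸ ha'⟩
  obtain ⟨E, hE⟩ := hker.exists_isCompl (Nat.one_le_iff_ne_zero.1 hN) fun b => by simp [hexp]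
  exact AddMonoidHom.exists_comp_eq_id_of_isCompl_ker hπ hE

theorem pure_split {A B C : Type*} [AddCommGroup A] [AddCommGroup B] [AddCommGroup C]
    (ι : A →+ B) (π : B →+ C)
    (hι : Function.Injective ι) (hπ : Function.Surjective π)
    (hexact : ι.range = π.ker)
    (N : ℕ) (hN : 1 ≤ N) (hexp : ∀ c : C, N • c = 0)
    (hpure : ∀ (n : ℕ) (a : A) (x : B), ι a = n • x → ∃ a' : A, ι a = n • ι a') :
    ∃ s : C →+ B, π.comp s = AddMonoidHom.id C :=
  pure_split_general ι π hπ hexact N hN hexp hpure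
end
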